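/- A random variable X satisfies E[f'(X)] = E[X f(X)] for all bounded continuously differentiable f : ℝ → ℝ with bounded derivative if and only if X has the standard normal distribution. -/

import Mathlib

open MeasureTheory ProbabilityTheory

open Real Set Filter
open scoped NNReal ENNReal

namespace SteinAux

noncomputable def φ (x : ℝ) : ℝ := Real.exp (-x ^ 2 / 2)

lemma φ_eq : φ = fun x : ℝ => Real.exp (-2⁻¹ * x ^ 2) := by
  funext x; unfold φ; congr 1; ring

lemma φ_pos (x : ℝ) : 0 < φ x := Real.exp_pos _
lemma φ_nonneg (x : ℝ) : 0 ≤ φ x := (φ_pos x).le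
lemma φ_cont : Continuous φ := by
  rw [φ_eq]; exact Real.continuous_exp.comp (by continuity)

lemma φ_integrable : Integrable φ := by
  rw [φ_eq]; exact integrable_exp_neg_mul_sq (by norm_num)

lemma tφ_integrable : Integrable (fun t : ℝ => t * φ t) := by
  rw [φ_eq]; exact integrable_mul_exp_neg_mul_sq (by norm_num)

lemma φ_hasDeriv (x : ℝ) : HasDerivAt φ (-x * φ x) x := by
  have h1 : HasDerivAt (fun x : ℝ => -x ^ 2 / 2) (-x) x := by
    have := ((hasDerivAt_pow 2 x).neg).div_const 2
    simpa using this.congr_deriv (by ring)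
  unfold φ; simpa [mul_comm] using h1.exp

lemma φ_integral : ∫ x, φ x = Real.sqrt (2 * π) := by
  rw [φ_eq, integral_gaussian]
  rw [show (2:ℝ)*π = π/2⁻¹ by ring]

lemma φ_tendsto_atTop : Tendsto φ atTop (nhds 0) := by
  have h2 : Tendsto (fun x : ℝ => x ^ 2 / 2) atTop atTop :=
    (tendsto_pow_atTop (two_ne_zero)).atTop_div_const (by norm_num)
  have h3 : Tendsto (fun x : ℝ => -x ^ 2 / 2) atTop atBot := by
    have := tendsto_neg_atTop_atBot.comp h2
    refine this.congr fun x => ?_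
    simp [Function.comp]; ring
  have := Real.tendsto_exp_atBot.comp h3
  exact this.congr fun x => by simp [Function.comp, φ]

lemma φ_tendsto_atBot : Tendsto φ atBot (nhds 0) := by
  have h2 : Tendsto (fun x : ℝ => -x) atBot atTop := tendsto_neg_atBot_atTop
  have := φ_tendsto_atTop.comp h2
  refine this.congr fun x => ?_
  simp [Function.comp, φ, neg_pow]

lemma gaussianPDFReal_eq (x : ℝ) :
    gaussianPDFReal 0 1 x = (Real.sqrt (2 * π))⁻¹ * φ x := by
  simp [gaussianPDFReal, φ]

lemma integral_gaussianReal_eq (g : ℝ → ℝ) :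
    ∫ x, g x ∂(gaussianReal 0 1) = (Real.sqrt (2 * π))⁻¹ * ∫ x, g x * φ x := by
  rw [gaussianReal_of_var_ne_zero 0 one_ne_zero]
  have hpdf : gaussianPDF 0 1 = fun x => (Real.toNNReal (gaussianPDFReal 0 1 x) : ℝ≥0∞) := by
    funext x; rfl
  rw [hpdf, integral_withDensity_eq_integral_smul
    ((measurable_gaussianPDFReal 0 1).real_toNNReal) g]
  rw [← integral_const_mul]
  congr 1; funext x
  rw [NNReal.smul_def, Real.coe_toNNReal _ (gaussianPDFReal_nonneg 0 1 x),
    gaussianPDFReal_eq, smul_eq_mul]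
  ring


lemma φ_hasDeriv_neg (x : ℝ) : HasDerivAt (fun t : ℝ => -φ t) (x * φ x) x := by
  exact (φ_hasDeriv x).neg.congr_deriv (by ring)

lemma neg_φ_tendsto_atTop : Tendsto (fun t : ℝ => -φ t) atTop (nhds 0) := by
  simpa using φ_tendsto_atTop.neg

lemma tail_integral_Ioi (x : ℝ) : ∫ t in Ioi x, t * φ t = φ x := by
  have := integral_Ioi_of_hasDerivAt_of_tendsto (a := x)
    (f := fun t : ℝ => -φ t) (f' := fun t : ℝ => t * φ t)
    (φ_cont.neg.continuousWithinAt)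
    (fun t _ => φ_hasDeriv_neg t)
    ((tφ_integrable.integrableOn))
    neg_φ_tendsto_atTop
  simpa using this

lemma tail_integral_Iic (x : ℝ) : ∫ t in Iic x, -t * φ t = φ x := by
  have := integral_Iic_of_hasDerivAt_of_tendsto (a := x)
    (f := φ) (f' := fun t : ℝ => -t * φ t)
    (φ_cont.continuousWithinAt)
    (fun t _ => by simpa using (φ_hasDeriv t))
    ((tφ_integrable.neg.integrableOn).congr_fun (fun t _ => by simp) measurableSet_Iic)
    φ_tendsto_atBot
  simpa using this

lemma tail_bound_pos {x : ℝ} (hx : 0 ≤ x) : x * ∫ t in Ioi x, φ t ≤ φ x := by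
  rw [← tail_integral_Ioi x, ← integral_const_mul]
  apply setIntegral_mono_on
  · exact (φ_integrable.const_mul x).integrableOn
  · exact tφ_integrable.integrableOn
  · exact measurableSet_Ioi
  · intro t ht
    exact mul_le_mul_of_nonneg_right (le_of_lt ht) (φ_nonneg t)

lemma tail_bound_neg {x : ℝ} (hx : x ≤ 0) : -x * ∫ t in Iic x, φ t ≤ φ x := by
  rw [← tail_integral_Iic x, ← integral_const_mul]
  apply setIntegral_mono_on
  · exact (φ_integrable.const_mul (-x)).integrableOn
  · exact (tφ_integrable.neg.integrableOn.congr_fun (fun t _ => by simp) measurableSet_Iic)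
  · exact measurableSet_Iic
  · intro t ht
    exact mul_le_mul_of_nonneg_right (neg_le_neg ht) (φ_nonneg t)

lemma tail_le_total {s : Set ℝ} (hs : MeasurableSet s) : ∫ t in s, φ t ≤ Real.sqrt (2 * π) := by
  rw [← φ_integral]
  exact setIntegral_le_integral φ_integrable (Filter.Eventually.of_forall φ_nonneg)

lemma tail_nonneg (s : Set ℝ) : 0 ≤ ∫ t in s, φ t :=
  integral_nonneg fun t => φ_nonneg t


lemma stein_solution (h : ℝ → ℝ) (hcont : Continuous h) (M : ℝ) (hM : ∀ x, |h x| ≤ M) :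
    ∃ f : ℝ → ℝ, ContDiff ℝ 1 f ∧ (∃ C, ∀ x, |f x| ≤ C) ∧ (∃ C, ∀ x, |deriv f x| ≤ C) ∧
      ∀ x, deriv f x = x * f x + (h x - ∫ t, h t ∂(gaussianReal 0 1)) := by
  set c : ℝ := ∫ t, h t ∂(gaussianReal 0 1) with hc
  set M' : ℝ := M + |c| with hM'def
  have hM0 : 0 ≤ M := le_trans (abs_nonneg (h 0)) (hM 0)
  have hM'0 : 0 ≤ M' := by positivity
  have hhc : ∀ x, |h x - c| ≤ M' := fun x =>
    (abs_sub (h x) c).trans (add_le_add_left (hM x) _)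
  set k : ℝ → ℝ := fun t => (h t - c) * φ t with hk
  have hkcont : Continuous k := (hcont.sub continuous_const).mul φ_cont
  have hkint : Integrable k :=
    φ_integrable.bdd_mul (c := M') (hcont.sub continuous_const).aestronglyMeasurable
      (Filter.Eventually.of_forall fun x => by simpa [Real.norm_eq_abs] using hhc x)
  have hktot : ∫ t, k t = 0 := by
    have h1 : ∫ t, h t * φ t = Real.sqrt (2 * π) * c := by
      rw [hc, integral_gaussianReal_eq, ← mul_assoc,
        mul_inv_cancel₀ (by positivity : Real.sqrt (2 * π) ≠ 0), one_mul]
    have h2 : Integrable (fun t => h t * φ t) :=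
      φ_integrable.bdd_mul (c := M) hcont.aestronglyMeasurable
        (Filter.Eventually.of_forall fun x => by simpa [Real.norm_eq_abs] using hM x)
    have h3 : ∫ t, k t = (∫ t, h t * φ t) - c * ∫ t, φ t := by
      rw [← integral_const_mul, ← integral_sub h2 (φ_integrable.const_mul c)]
      congr 1; funext t; simp only [hk]; ring
    rw [h3, h1, φ_integral]; ring
  set G : ℝ → ℝ := fun x => ∫ t in Iic x, k t with hG
  have hGIoi : ∀ x, G x = -∫ t in Ioi x, k t := by
    intro x
    have h3 : G x + ∫ t in Ioi x, k t = 0 := by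
      rw [hG]
      simp only
      rw [show Ioi x = (Iic x)ᶜ by simp,
        integral_add_compl measurableSet_Iic hkint, hktot]
    linarith
  have hGbound : ∀ s : Set ℝ, MeasurableSet s → |∫ t in s, k t| ≤ M' * ∫ t in s, φ t := by
    intro s hs
    calc |∫ t in s, k t| ≤ ∫ t in s, |k t| := by
          simpa [Real.norm_eq_abs] using norm_integral_le_integral_norm (μ := volume.restrict s) k
      _ ≤ ∫ t in s, M' * φ t := by
          apply integral_mono_of_nonneg (Filter.Eventually.of_forall fun t => abs_nonneg _)
            ((φ_integrable.const_mul M').integrableOn)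
            (Filter.Eventually.of_forall fun t => ?_)
          simp only [hk, abs_mul, abs_of_nonneg (φ_nonneg t)]
          exact mul_le_mul_of_nonneg_right (hhc t) (φ_nonneg t)
      _ = M' * ∫ t in s, φ t := integral_const_mul _ _
  have hGderiv : ∀ x, HasDerivAt G (k x) x := by
    intro x
    have h4 : HasStrictDerivAt (fun u => ∫ t in (0:ℝ)..u, k t) (k x) x :=
      hkcont.integral_hasStrictDerivAt 0 x
    have h5 : (fun u => G 0 + ∫ t in (0:ℝ)..u, k t) = G := by
      funext u
      have := intervalIntegral.integral_Iic_sub_Iic hkint.integrableOn hkint.integrableOn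
        (a := 0) (b := u) (μ := volume)
      simp only [hG]
      linarith
    exact h5 ▸ (h4.hasDerivAt.const_add (G 0))
  set f : ℝ → ℝ := fun x => Real.exp (x ^ 2 / 2) * G x with hf
  have hexp0 : ∀ x : ℝ, Real.exp (x ^ 2 / 2) * φ x = 1 := by
    intro x
    rw [φ, ← Real.exp_add, show x ^ 2 / 2 + -x ^ 2 / 2 = 0 by ring, Real.exp_zero]
  have hexp : ∀ x : ℝ, HasDerivAt (fun y : ℝ => Real.exp (y ^ 2 / 2))
      (x * Real.exp (x ^ 2 / 2)) x := by
    intro x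
    have h6 : HasDerivAt (fun y : ℝ => y ^ 2 / 2) x x := by
      simpa using (hasDerivAt_pow 2 x).div_const 2
    simpa [mul_comm] using h6.exp
  have hfderiv : ∀ x, HasDerivAt f (x * f x + (h x - c)) x := by
    intro x
    have h7 := (hexp x).mul (hGderiv x)
    have h8 : Real.exp (x ^ 2 / 2) * k x = h x - c := by
      rw [hk]
      simp only
      rw [mul_comm (h x - c) (φ x), ← mul_assoc, hexp0 x, one_mul]
    refine h7.congr_deriv ?_
    rw [← h8, hf]
    ring
  have hfC1 : ContDiff ℝ 1 f := by
    rw [contDiff_one_iff_deriv]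
    have hdiff : Differentiable ℝ f := fun x => (hfderiv x).differentiableAt
    refine ⟨hdiff, ?_⟩
    have hde : deriv f = fun x => x * f x + (h x - c) := funext fun x => (hfderiv x).deriv
    rw [hde]
    exact (continuous_id.mul hdiff.continuous).add (hcont.sub continuous_const)
  have habsf : ∀ x, |f x| = Real.exp (x ^ 2 / 2) * |G x| := by
    intro x
    rw [hf]
    simp only
    rw [abs_mul, abs_of_nonneg (Real.exp_pos _).le]
  have hxf : ∀ x, |x * f x| ≤ M' := by
    intro x
    have habs : |x * f x| = |x| * Real.exp (x ^ 2 / 2) * |G x| := by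
      rw [abs_mul, habsf x]; ring
    rcases le_total 0 x with hx | hx
    · have h9 : |G x| ≤ M' * ∫ t in Ioi x, φ t := by
        rw [hGIoi x, abs_neg]; exact hGbound (Ioi x) measurableSet_Ioi
      calc |x * f x| = |x| * Real.exp (x ^ 2 / 2) * |G x| := habs
        _ ≤ |x| * Real.exp (x ^ 2 / 2) * (M' * ∫ t in Ioi x, φ t) := by
            apply mul_le_mul_of_nonneg_left h9 (by positivity)
        _ = M' * (Real.exp (x ^ 2 / 2) * (x * ∫ t in Ioi x, φ t)) := by
            rw [abs_of_nonneg hx]; ring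
        _ ≤ M' * (Real.exp (x ^ 2 / 2) * φ x) := by
            apply mul_le_mul_of_nonneg_left
              (mul_le_mul_of_nonneg_left (tail_bound_pos hx) (Real.exp_pos _).le) hM'0
        _ = M' := by rw [hexp0 x, mul_one]
    · have h9 : |G x| ≤ M' * ∫ t in Iic x, φ t := hGbound (Iic x) measurableSet_Iic
      calc |x * f x| = |x| * Real.exp (x ^ 2 / 2) * |G x| := habs
        _ ≤ |x| * Real.exp (x ^ 2 / 2) * (M' * ∫ t in Iic x, φ t) := by
            apply mul_le_mul_of_nonneg_left h9 (by positivity)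
        _ = M' * (Real.exp (x ^ 2 / 2) * (-x * ∫ t in Iic x, φ t)) := by
            rw [abs_of_nonpos hx]; ring
        _ ≤ M' * (Real.exp (x ^ 2 / 2) * φ x) := by
            apply mul_le_mul_of_nonneg_left
              (mul_le_mul_of_nonneg_left (tail_bound_neg hx) (Real.exp_pos _).le) hM'0
        _ = M' := by rw [hexp0 x, mul_one]
  have hfb : ∀ x, |f x| ≤ M' * (Real.exp 2⁻¹ * Real.sqrt (2 * π)) + M' := by
    intro x
    rcases le_total (|x|) 1 with hx | hx
    · have h9 : |G x| ≤ M' * Real.sqrt (2 * π) := by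
        refine (hGbound (Iic x) measurableSet_Iic).trans ?_
        exact mul_le_mul_of_nonneg_left (tail_le_total measurableSet_Iic) hM'0
      have hx2 : x ^ 2 / 2 ≤ 2⁻¹ := by nlinarith [abs_nonneg x, sq_abs x]
      have h10 : |f x| ≤ Real.exp 2⁻¹ * (M' * Real.sqrt (2 * π)) := by
        rw [habsf x]
        exact mul_le_mul (Real.exp_le_exp.2 hx2) h9 (abs_nonneg _) (Real.exp_pos _).le
      refine h10.trans ?_
      have := le_add_of_nonneg_right (a := M' * (Real.exp 2⁻¹ * Real.sqrt (2 * π))) hM'0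
      linarith
    · have h11 : |f x| ≤ |x * f x| :=
        calc |f x| ≤ |x| * |f x| := le_mul_of_one_le_left (abs_nonneg _) hx
          _ = |x * f x| := (abs_mul _ _).symm
      refine (h11.trans (hxf x)).trans ?_
      have h12 : 0 ≤ M' * (Real.exp 2⁻¹ * Real.sqrt (2 * π)) := by positivity
      linarith
  refine ⟨f, hfC1, ⟨_, hfb⟩, ⟨2 * M', ?_⟩, fun x => (hfderiv x).deriv⟩
  intro x
  rw [(hfderiv x).deriv]
  calc |x * f x + (h x - c)| ≤ |x * f x| + |h x - c| := abs_add_le _ _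
    _ ≤ M' + M' := add_le_add (hxf x) (hhc x)
    _ = 2 * M' := by ring

end SteinAux


open SteinAux in
/-- Stein's lemma: an integrable real random variable `X` satisfies the
integration-by-parts formula `E[f'(X)] = E[X f(X)]` for all bounded `C¹`
functions `f` with bounded derivative if and only if `X` is standard normal. -/
theorem stmt_10 {Ω : Type*} [MeasurableSpace Ω] (P : Measure Ω) [IsProbabilityMeasure P]
    (X : Ω → ℝ) (hXmeas : Measurable X) (hXint : Integrable X P) :
    (∀ f : ℝ → ℝ, ContDiff ℝ 1 f → (∃ C, ∀ x, |f x| ≤ C) →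
        (∃ C, ∀ x, |deriv f x| ≤ C) →
        (∫ ω, deriv f (X ω) ∂P) = ∫ ω, X ω * f (X ω) ∂P) ↔
      Measure.map X P = gaussianReal 0 1 := by
  constructor
  · intro H
    have hXP : IsProbabilityMeasure (Measure.map X P) :=
      Measure.isProbabilityMeasure_map hXmeas.aemeasurable
    have key : ∀ (h : ℝ → ℝ), Continuous h → ∀ M : ℝ, (∀ x, |h x| ≤ M) →
        ∫ x, h x ∂(Measure.map X P) = ∫ x, h x ∂(gaussianReal 0 1) := by
      intro h hcont M hM
      obtain ⟨f, hC1, hbd, hbd', hder⟩ := SteinAux.stein_solution h hcont M hM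
      have Hf := H f hC1 hbd hbd'
      set c : ℝ := ∫ t, h t ∂(gaussianReal 0 1) with hc
      obtain ⟨C, hC⟩ := hbd
      have hfc : Continuous f := hC1.continuous
      have hA : Integrable (fun ω => X ω * f (X ω)) P := by
        have : Integrable (fun ω => f (X ω) * X ω) P :=
          hXint.bdd_mul (c := C) ((hfc.measurable.comp hXmeas).aestronglyMeasurable)
            (Filter.Eventually.of_forall fun ω => by
              simpa [Real.norm_eq_abs] using hC (X ω))
        exact this.congr (Filter.Eventually.of_forall fun ω => mul_comm _ _)
      have hhX : Integrable (fun ω => h (X ω)) P := by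
        refine ⟨(hcont.measurable.comp hXmeas).aestronglyMeasurable, ?_⟩
        apply HasFiniteIntegral.of_bounded (C := M)
        exact Filter.Eventually.of_forall fun ω => by
          simpa [Real.norm_eq_abs] using hM (X ω)
      have hB : Integrable (fun ω => h (X ω) - c) P := hhX.sub (integrable_const c)
      have hEq : (fun ω => deriv f (X ω)) = fun ω => X ω * f (X ω) + (h (X ω) - c) := by
        funext ω; rw [hder (X ω)]
      rw [hEq, integral_add hA hB] at Hf
      have h0 : ∫ ω, (h (X ω) - c) ∂P = 0 := by linarith
      rw [integral_sub hhX (integrable_const c), integral_const] at h0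
      have h1 : ∫ ω, h (X ω) ∂P = c := by
        simp at h0; linarith
      rw [integral_map hXmeas.aemeasurable hcont.aestronglyMeasurable, h1]
    apply ext_of_forall_lintegral_eq_of_IsFiniteMeasure
    intro g
    have hgc : Continuous (fun x : ℝ => (g x : ℝ)) := NNReal.continuous_coe.comp g.continuous
    obtain ⟨Cb, hCb⟩ := g.map_bounded'
    have hgb : ∀ x, |(g x : ℝ)| ≤ Cb + (g 0 : ℝ) := fun x => by
      rw [abs_of_nonneg (g x).coe_nonneg]
      have h2 := hCb x 0
      rw [NNReal.dist_eq] at h2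
      have h3 := (abs_le.1 h2).2
      have h4 : (g x : ℝ) - (g 0 : ℝ) ≤ Cb := h3
      linarith
    have h1 := key _ hgc (Cb + (g 0 : ℝ)) hgb
    have hint1 : Integrable (fun x : ℝ => (g x : ℝ)) (Measure.map X P) :=
      ⟨hgc.aestronglyMeasurable, HasFiniteIntegral.of_bounded (C := Cb + (g 0 : ℝ))
        (Filter.Eventually.of_forall fun x => by
          simpa [Real.norm_eq_abs] using hgb x)⟩
    have hint2 : Integrable (fun x : ℝ => (g x : ℝ)) (gaussianReal 0 1) :=
      ⟨hgc.aestronglyMeasurable, HasFiniteIntegral.of_bounded (C := Cb + (g 0 : ℝ))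
        (Filter.Eventually.of_forall fun x => by
          simpa [Real.norm_eq_abs] using hgb x)⟩
    rw [lintegral_coe_eq_integral _ hint1, lintegral_coe_eq_integral _ hint2, h1]
  · intro hmap f hC1 hbd hbd'
    obtain ⟨C, hC⟩ := hbd
    obtain ⟨C', hC'⟩ := hbd'
    have hfc : Continuous f := hC1.continuous
    have hdc : Continuous (deriv f) := hC1.continuous_deriv le_rfl
    have e1 : ∫ ω, deriv f (X ω) ∂P = ∫ x, deriv f x ∂(gaussianReal 0 1) := by
      rw [← hmap]
      exact (integral_map hXmeas.aemeasurable hdc.aestronglyMeasurable).symm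
    have e2 : ∫ ω, X ω * f (X ω) ∂P = ∫ x, x * f x ∂(gaussianReal 0 1) := by
      rw [← hmap]
      exact (integral_map hXmeas.aemeasurable
        ((continuous_id.mul hfc).aestronglyMeasurable)).symm
    rw [e1, e2, SteinAux.integral_gaussianReal_eq, SteinAux.integral_gaussianReal_eq]
    have hD1 : Integrable (fun x => deriv f x * φ x) :=
      φ_integrable.bdd_mul (c := C') hdc.aestronglyMeasurable
        (Filter.Eventually.of_forall fun x => by simpa [Real.norm_eq_abs] using hC' x)
    have hD2 : Integrable (fun x => x * f x * φ x) := by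
      apply Integrable.mono' (tφ_integrable.abs.const_mul C)
        ((continuous_id'.mul hfc).mul φ_cont).aestronglyMeasurable
      refine Filter.Eventually.of_forall fun x => ?_
      have : ‖x * f x * φ x‖ = |f x| * |x * φ x| := by
        rw [Real.norm_eq_abs, abs_mul, abs_mul, abs_mul]; ring
      show ‖x * f x * φ x‖ ≤ C * |x * φ x|
      rw [this]
      exact mul_le_mul_of_nonneg_right (hC x) (abs_nonneg _)
    have hD : Integrable (fun x => deriv f x * φ x - x * f x * φ x) := hD1.sub hD2
    have hg' : ∀ x, HasDerivAt (fun y => f y * φ y)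
        (deriv f x * φ x - x * f x * φ x) x := by
      intro x
      have := ((hC1.differentiable one_ne_zero x).hasDerivAt).mul (φ_hasDeriv x)
      refine this.congr_deriv ?_; ring
    have hsq : ∀ y : ℝ, ‖f y * φ y‖ ≤ C * φ y := by
      intro y
      rw [Real.norm_eq_abs, abs_mul, abs_of_nonneg (φ_nonneg y)]
      exact mul_le_mul_of_nonneg_right (hC y) (φ_nonneg y)
    have htop : Filter.Tendsto (fun y => f y * φ y) Filter.atTop (nhds 0) := by
      apply squeeze_zero_norm hsq
      simpa using φ_tendsto_atTop.const_mul C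
    have hbot : Filter.Tendsto (fun y => f y * φ y) Filter.atBot (nhds 0) := by
      apply squeeze_zero_norm hsq
      simpa using φ_tendsto_atBot.const_mul C
    have i1 : ∫ x in Set.Iic (0:ℝ), (deriv f x * φ x - x * f x * φ x) =
        f 0 * φ 0 - 0 :=
      integral_Iic_of_hasDerivAt_of_tendsto
        ((hfc.mul φ_cont).continuousWithinAt) (fun x _ => hg' x)
        (hD.integrableOn) hbot
    have i2 : ∫ x in Set.Ioi (0:ℝ), (deriv f x * φ x - x * f x * φ x) =
        0 - f 0 * φ 0 :=
      integral_Ioi_of_hasDerivAt_of_tendsto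
        ((hfc.mul φ_cont).continuousWithinAt) (fun x _ => hg' x)
        (hD.integrableOn) htop
    have itot : ∫ x, (deriv f x * φ x - x * f x * φ x) = 0 := by
      rw [← integral_add_compl measurableSet_Iic hD,
        show (Set.Iic (0:ℝ))ᶜ = Set.Ioi 0 by simp, i1, i2]
      ring
    have h5 := integral_sub hD1 hD2
    have itot2 : (∫ x, deriv f x * φ x) - ∫ x, x * f x * φ x = 0 := by
      linarith
    have : ∫ x, deriv f x * φ x = ∫ x, x * f x * φ x := by linarith
    rw [this]
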